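/- arXiv:2008.01164 — 3 statements merged into one kernel-verified Lean document; each statement's English description precedes it below -/
import Mathlib

section
/- A permutation of length n avoids the pattern 231 if and only if the classical stack-sorting map s sends it to the identity permutation. -/
open List

attribute [local instance] Classical.propDecidable

/-- `u` is order-isomorphic to `v`. -/
def OrdIso (u v : List ℕ) : Prop :=
  u.length = v.length ∧
    ∀ i j, i < u.length → j < u.length →
      (u.getD i 0 < u.getD j 0 ↔ v.getD i 0 < v.getD j 0)

/-- The word `w` contains the pattern `p`. -/
def Contains (w p : List ℕ) : Prop :=
  ∃ u, u.Sublist w ∧ OrdIso u p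

/-- The word `w` avoids every pattern in `T`. -/
def AvoidsSet (T : Set (List ℕ)) (w : List ℕ) : Prop :=
  ∀ p ∈ T, ¬ Contains w p

/-- One step of the `T`-avoiding stack machine: state is (input, stack, output);
the stack is read top to bottom (head is the top). -/
noncomputable def sTaux (T : Set (List ℕ)) : List ℕ → List ℕ → List ℕ → List ℕ
  | [], stack, out => out ++ stack
  | x :: rest, stack, out =>
    if AvoidsSet T (x :: stack) then sTaux T rest (x :: stack) out
    else
      match stack with
      | [] => sTaux T rest [x] out
      | y :: s => sTaux T (x :: rest) s (out ++ [y])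
termination_by input stack _ => 2 * input.length + stack.length
decreasing_by all_goals first | (simp_wf; omega) | omega | simp_wf

/-- The stack-sorting map `s_T`. -/
noncomputable def sT (T : Set (List ℕ)) (w : List ℕ) : List ℕ := sTaux T w [] []

/-- `w` is a permutation of `{1, …, w.length}`. -/
def IsPermList (w : List ℕ) : Prop := w.Perm (List.range' 1 w.length)

/-- `T` is reduced: no element of `T` contains another element of `T`. -/
def Reduced (T : Set (List ℕ)) : Prop :=
  ∀ σ ∈ T, ∀ τ ∈ T, σ ≠ τ → ¬ Contains σ τ

/-- `σ̂`: swap the first two entries of `σ`. -/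
def hat : List ℕ → List ℕ
  | a :: b :: t => b :: a :: t
  | l => l


/-!
With the stack kept weakly increasing from the top, the largest entry `n` of `L ++ n :: R`
(taken at its first occurrence) pops everything left of it and then stays at the bottom
of the stack until the end, so `s (L ++ n :: R) = s L ++ s R ++ [n]`. Hence `s w` is sorted
iff `s L` and `s R` are sorted and every entry of `L` is at most every entry of `R`; by
induction this means that `L` and `R` avoid 231 and there is no `a ∈ L`, `b ∈ R` with `b < a`,
which is exactly 231-avoidance of `L ++ n :: R`. A sorted rearrangement of `{1, …, n}` is
the identity.
-/

section Machine

variable (T : Set (List ℕ))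

theorem sTaux_cons_nil (x : ℕ) (rest out : List ℕ) :
    sTaux T (x :: rest) [] out = sTaux T rest [x] out := by
  rw [sTaux.eq_2, ite_self]

variable {T}

theorem sTaux_push {x : ℕ} {rest stack out : List ℕ} (h : AvoidsSet T (x :: stack)) :
    sTaux T (x :: rest) stack out = sTaux T rest (x :: stack) out := by
  rw [sTaux.eq_def]
  simp only [if_pos h]

theorem sTaux_pop {x y : ℕ} {rest stack out : List ℕ} (h : ¬ AvoidsSet T (x :: y :: stack)) :
    sTaux T (x :: rest) (y :: stack) out = sTaux T (x :: rest) stack (out ++ [y]) := by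
  rw [sTaux.eq_3, if_neg h]

variable (T)

theorem sTaux_append_out (input stack o out : List ℕ) :
    sTaux T input stack (o ++ out) = o ++ sTaux T input stack out := by
  fun_induction sTaux T input stack out with
  | case1 => simp [sTaux.eq_1]
  | case2 x rest stack out h ih => rw [sTaux_push h, ih]
  | case3 x rest out _ ih => rw [sTaux_cons_nil, ih]
  | case4 x rest out y s h ih => rw [sTaux_pop h, append_assoc, ih]

theorem sTaux_perm (input stack out : List ℕ) :
    sTaux T input stack out ~ out ++ stack ++ input := by
  fun_induction sTaux T input stack out with
  | case1 => simp
  | case2 x rest stack out h ih => exact ih.trans (by simpa using perm_middle.symm.append_left out)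
  | case3 x rest out _ ih => simpa using ih
  | case4 x rest out y s h ih => simpa using ih

theorem sT_perm (w : List ℕ) : sT T w ~ w := by
  simpa [sT] using sTaux_perm T w [] []

end Machine

theorem contains_21_iff (w : List ℕ) :
    Contains w [2,1] ↔ ∃ a b, b < a ∧ [a,b] <+ w := by
  constructor
  · rintro ⟨u, hu, hlen, hiff⟩
    match u, hlen with
    | [a,b], _ =>
      refine ⟨a, b, ?_, hu⟩
      simpa using (hiff 1 0 (by simp) (by simp)).mpr (by norm_num)
  · rintro ⟨a, b, hab, hsub⟩
    refine ⟨[a,b], hsub, rfl, fun i j hi hj => ?_⟩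
    simp only [length_cons, length_nil] at hi hj
    interval_cases i <;> interval_cases j <;> simp [List.getD] <;> omega

theorem avoidsSet_21_iff (w : List ℕ) : AvoidsSet {[2,1]} w ↔ w.Pairwise (· ≤ ·) := by
  simp only [AvoidsSet, Set.mem_singleton_iff, forall_eq, contains_21_iff,
    pairwise_iff_forall_sublist]
  grind

theorem sTaux_cons_of_forall_lt {n : ℕ} {stack : List ℕ} (h : ∀ a ∈ stack, a < n)
    (rest out : List ℕ) :
    sTaux {[2,1]} (n :: rest) stack out = sTaux {[2,1]} rest [n] (out ++ stack) := by
  induction stack generalizing out with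
  | nil => simp [sTaux_cons_nil]
  | cons y s ih =>
    have hpop : ¬ AvoidsSet {[2,1]} (n :: y :: s) := by
      rw [avoidsSet_21_iff, pairwise_cons]
      exact fun h' => (h'.1 y mem_cons_self).not_gt (h y mem_cons_self)
    rw [sTaux_pop hpop, ih (fun a ha => h a (mem_cons_of_mem y ha))]
    simp

theorem sTaux_stack_append {input top bot out : List ℕ} (hstack : (top ++ bot).Pairwise (· ≤ ·))
    (hinput : ∀ a ∈ input, ∀ b ∈ bot, a ≤ b) :
    sTaux {[2,1]} input (top ++ bot) out = sTaux {[2,1]} input top out ++ bot := by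
  fun_induction sTaux {[2,1]} input top out with
  | case1 => simp [sTaux.eq_1]
  | case2 x rest top out h ih =>
    have hpush : (x :: (top ++ bot)).Pairwise (· ≤ ·) := by
      refine pairwise_cons.mpr ⟨fun a ha => ?_, hstack⟩
      rcases mem_append.mp ha with ha | ha
      · exact (pairwise_cons.mp ((avoidsSet_21_iff _).mp h)).1 a ha
      · exact hinput x mem_cons_self a ha
    rw [sTaux_push ((avoidsSet_21_iff _).mpr hpush)]
    exact ih hpush (fun a ha => hinput a (mem_cons_of_mem x ha))
  | case3 x rest out h => exact absurd ((avoidsSet_21_iff _).mpr (pairwise_singleton _ x)) h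
  | case4 x rest out y s h ih =>
    have hpop : ¬ AvoidsSet {[2,1]} (x :: y :: (s ++ bot)) := by
      rw [avoidsSet_21_iff] at h ⊢
      exact fun h' => h (h'.sublist (by simp))
    rw [cons_append, sTaux_pop hpop]
    exact ih (hstack.sublist (sublist_cons_self y _)) hinput

theorem sTaux_append_cons_of_lt {n : ℕ} {pre stack out : List ℕ} (hpre : ∀ a ∈ pre, a < n)
    (hstack : ∀ a ∈ stack, a < n) (post : List ℕ) :
    sTaux {[2,1]} (pre ++ n :: post) stack out =
      sTaux {[2,1]} pre stack out ++ sTaux {[2,1]} post [n] [] := by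
  fun_induction sTaux {[2,1]} pre stack out with
  | case1 stack out =>
    rw [nil_append, sTaux_cons_of_forall_lt hstack, ← sTaux_append_out, append_nil]
  | case2 x rest stack out h ih =>
    rw [cons_append, sTaux_push h]
    exact ih (fun a ha => hpre a (mem_cons_of_mem x ha))
      (forall_mem_cons.mpr ⟨hpre x mem_cons_self, hstack⟩)
  | case3 x rest out h => exact absurd ((avoidsSet_21_iff _).mpr (pairwise_singleton _ x)) h
  | case4 x rest out y s h ih =>
    rw [cons_append, sTaux_pop h]
    exact ih hpre (fun a ha => hstack a (mem_cons_of_mem y ha))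

theorem sT_append_cons_of_first_max {n : ℕ} {pre post : List ℕ} (hpre : ∀ a ∈ pre, a < n)
    (hpost : ∀ a ∈ post, a ≤ n) :
    sT {[2,1]} (pre ++ n :: post) = sT {[2,1]} pre ++ sT {[2,1]} post ++ [n] := by
  have hpost' := sTaux_stack_append (top := []) (out := []) (pairwise_singleton _ n)
    (fun a ha b hb => (mem_singleton.mp hb) ▸ hpost a ha)
  rw [nil_append] at hpost'
  rw [sT, sTaux_append_cons_of_lt hpre (by simp), hpost', append_assoc]
  rfl

theorem List.exists_eq_append_cons_first_max {α : Type*} [LinearOrder α] :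
    ∀ {w : List α}, w ≠ [] →
      ∃ pre n post, w = pre ++ n :: post ∧ (∀ a ∈ pre, a < n) ∧ ∀ a ∈ post, a ≤ n
  | [], hw => absurd rfl hw
  | [x], _ => ⟨[], x, [], rfl, by simp, by simp⟩
  | x :: y :: w, _ => by
    obtain ⟨pre, n, post, hw, hpre, hpost⟩ := exists_eq_append_cons_first_max (cons_ne_nil y w)
    by_cases hx : x < n
    · exact ⟨x :: pre, n, post, by rw [hw, cons_append], forall_mem_cons.mpr ⟨hx, hpre⟩, hpost⟩
    · have hnx : n ≤ x := not_lt.mp hx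
      refine ⟨[], x, y :: w, rfl, by simp, fun a ha => ?_⟩
      rw [hw, mem_append, mem_cons] at ha
      rcases ha with ha | rfl | ha
      exacts [(hpre a ha).le.trans hnx, hnx, (hpost a ha).trans hnx]

theorem List.triple_sublist_append {α : Type*} {a b c : α} {l₁ l₂ : List α}
    (h : [a, b, c] <+ l₁ ++ l₂) :
    [a, b, c] <+ l₁ ∨ (a ∈ l₁ ∧ c ∈ l₂) ∨ [a, b, c] <+ l₂ := by
  obtain ⟨u, v, huv, hu, hv⟩ := sublist_append_iff.mp h
  rcases u with _ | ⟨u₁, _ | ⟨u₂, _ | ⟨u₃, u⟩⟩⟩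
  · exact Or.inr (Or.inr (by simpa [huv] using hv))
  · simp only [cons_append, nil_append, cons.injEq] at huv
    obtain ⟨rfl, rfl⟩ := huv
    exact Or.inr (Or.inl ⟨hu.subset mem_cons_self, hv.subset (by simp)⟩)
  · simp only [cons_append, nil_append, cons.injEq] at huv
    obtain ⟨rfl, rfl, rfl⟩ := huv
    exact Or.inr (Or.inl ⟨hu.subset mem_cons_self, hv.subset (by simp)⟩)
  · simp only [cons_append, cons.injEq, nil_eq, append_eq_nil_iff] at huv
    obtain ⟨rfl, rfl, rfl, rfl, rfl⟩ := huv
    exact Or.inl hu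

theorem contains_231_iff (w : List ℕ) :
    Contains w [2,3,1] ↔ ∃ a b c, a < b ∧ c < a ∧ [a,b,c] <+ w := by
  constructor
  · rintro ⟨u, hu, hlen, hiff⟩
    match u, hlen with
    | [a,b,c], _ =>
      refine ⟨a, b, c, ?_, ?_, hu⟩
      · simpa using (hiff 0 1 (by simp) (by simp)).mpr (by norm_num)
      · simpa using (hiff 2 0 (by simp) (by simp)).mpr (by norm_num)
  · rintro ⟨a, b, c, hab, hca, hsub⟩
    refine ⟨[a,b,c], hsub, rfl, fun i j hi hj => ?_⟩
    simp only [length_cons, length_nil] at hi hj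
    interval_cases i <;> interval_cases j <;> simp [List.getD] <;> omega

theorem contains_231_append_cons_iff {n : ℕ} {pre post : List ℕ} (hpre : ∀ a ∈ pre, a < n)
    (hpost : ∀ a ∈ post, a ≤ n) :
    Contains (pre ++ n :: post) [2,3,1] ↔
      Contains pre [2,3,1] ∨ Contains post [2,3,1] ∨ ∃ a ∈ pre, ∃ b ∈ post, b < a := by
  simp only [contains_231_iff]
  constructor
  · rintro ⟨a, b, c, hab, hca, h⟩
    rcases triple_sublist_append h with h | ⟨ha, hc⟩ | h
    · exact Or.inl ⟨a, b, c, hab, hca, h⟩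
    · refine Or.inr (Or.inr ⟨a, ha, c, ?_, hca⟩)
      exact (mem_cons.mp hc).resolve_left (hca.trans (hpre a ha)).ne
    · rcases sublist_cons_iff.mp h with h | ⟨r, hr, h⟩
      · exact Or.inr (Or.inl ⟨a, b, c, hab, hca, h⟩)
      · obtain ⟨rfl, rfl⟩ := cons.inj hr
        exact absurd (hpost b (h.subset mem_cons_self)) (not_le.mpr hab)
  · rintro (⟨a, b, c, hab, hca, h⟩ | ⟨a, b, c, hab, hca, h⟩ | ⟨a, ha, c, hc, hca⟩)
    · exact ⟨a, b, c, hab, hca, h.trans (sublist_append_left _ _)⟩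
    · exact ⟨a, b, c, hab, hca,
        h.trans ((sublist_cons_self n post).trans (sublist_append_right _ _))⟩
    · refine ⟨a, n, c, hpre a ha, hca, ?_⟩
      exact (singleton_sublist.mpr ha).append (cons_sublist_cons.mpr (singleton_sublist.mpr hc))

theorem pairwise_le_sT_21_iff (w : List ℕ) :
    (sT {[2,1]} w).Pairwise (· ≤ ·) ↔ ¬ Contains w [2,3,1] := by
  rcases eq_or_ne w [] with rfl | hw
  · simp [sT, sTaux.eq_1, contains_231_iff]
  obtain ⟨pre, n, post, rfl, hpre, hpost⟩ := exists_eq_append_cons_first_max hw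
  have ihpre := pairwise_le_sT_21_iff pre
  have ihpost := pairwise_le_sT_21_iff post
  rw [sT_append_cons_of_first_max hpre hpost, contains_231_append_cons_iff hpre hpost,
    pairwise_append, pairwise_append, ihpre, ihpost]
  simp only [(sT_perm _ pre).mem_iff, (sT_perm _ post).mem_iff, pairwise_singleton, mem_append,
    mem_singleton, true_and, forall_eq, not_or, not_exists, not_and, not_lt]
  exact and_iff_left fun a ha => ha.elim (hpre a · |>.le) (hpost a)
termination_by w.length
decreasing_by all_goals subst_vars; simp only [length_append, length_cons]; omega

/-- A permutation avoids 231 iff classical stack sort (the 21-avoiding stack) sends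
it to the identity. -/
theorem stmt0 (n : ℕ) (π : List ℕ) (hπ : IsPermList π) (hlen : π.length = n) :
    ¬ Contains π [2,3,1] ↔ sT {[2,1]} π = List.range' 1 n := by
  subst hlen
  have hperm : sT {[2,1]} π ~ List.range' 1 π.length := (sT_perm _ π).trans hπ
  rw [← pairwise_le_sT_21_iff]
  exact ⟨fun h => hperm.eq_of_pairwise (fun _ _ _ _ => le_antisymm) h pairwise_le_range',
    fun h => h ▸ pairwise_le_range'⟩
end

section
/- Let T be a set of permutations and π a permutation that does not avoid T^r, with T-clumping (a_0, …, a_k). Then s_T(π) = a_{k-1}^r · s_T(a_0 ⋯ a_{k-2} a_k), where a^r denotes the reverse of a. -/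
open List

attribute [local instance] Classical.propDecidable

/-- `is` is (the list of 0-based indices of) an occurrence in `π` of the reverse of
some pattern in `T`. -/
def IsOcc (T : Set (List ℕ)) (π : List ℕ) (is : List ℕ) : Prop :=
  is.Chain' (· < ·) ∧ (∀ i ∈ is, i < π.length) ∧
    ∃ σ ∈ T, OrdIso (is.map (fun i => π.getD i 0)) σ.reverse

/-- Colexicographic (non-strict) order on index tuples. -/
def ColexLe (u v : List ℕ) : Prop := u = v ∨ List.Lex (· < ·) u.reverse v.reverse

/-- `as = (a_0, …, a_k)` is the `T`-clumping of `π`: the blocks concatenate to `π`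
and the indices of the first entries of `a_1, …, a_k` form the colexicographically
least occurrence in `π` of the reverse of a pattern of `T`. -/
def IsClumping (T : Set (List ℕ)) (π : List ℕ) (as : List (List ℕ)) : Prop :=
  as.flatten = π ∧ 2 ≤ as.length ∧
  IsOcc T π ((List.range (as.length - 1)).map (fun i => ((as.take (i + 1)).flatten).length)) ∧
  ∀ js, IsOcc T π js →
    ColexLe ((List.range (as.length - 1)).map (fun i => ((as.take (i + 1)).flatten).length)) js

/-!
Write `π = A ++ B ++ C` with `A = a₀ ⋯ a_{k-2}`, `B = a_{k-1}`, `C = a_k`, and let `x` be the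
first entry of `C`, the last entry of the least occurrence. By colex-minimality no occurrence
of a pattern `σʳ` ends before `x`, so the machine pushes all of `A ++ B`. The rest of the least
occurrence lies in `A` and the first entry of `B`, so it stays on the stack while `x` pops the
entries of `B` one by one: this outputs `Bʳ` and leaves the stack `Aʳ`, which is also the state
reached on `A ++ C` just before `x` is read.
-/

theorem List.map_getD_range {α : Type*} (w : List α) (d : α) :
    (range w.length).map (w.getD · d) = w := by
  refine List.ext_getElem (by simp) fun _ _ h => ?_
  simp [getElem?_eq_getElem h]

theorem List.sublist_range_iff {is : List ℕ} {n : ℕ} :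
    is <+ range n ↔ is.Pairwise (· < ·) ∧ ∀ i ∈ is, i < n := by
  refine ⟨fun h => ⟨pairwise_lt_range.sublist h, fun i hi => mem_range.mp (h.subset hi)⟩,
    fun ⟨hlt, hn⟩ => sublist_of_subperm_of_pairwise ?_ hlt pairwise_lt_range⟩
  exact subperm_of_subset hlt.nodup fun i hi => mem_range.mpr (hn i hi)

theorem contains_iff_exists_indices {w p : List ℕ} :
    Contains w p ↔ ∃ is, is <+ range w.length ∧ OrdIso (is.map (w.getD · 0)) p := by
  conv_lhs => rw [Contains, ← List.map_getD_range w 0]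
  simp only [sublist_map_iff]
  constructor
  · rintro ⟨_, ⟨is, his, rfl⟩, hiso⟩
    exact ⟨is, his, hiso⟩
  · rintro ⟨is, his, hiso⟩
    exact ⟨_, ⟨is, his, rfl⟩, hiso⟩

theorem isOcc_iff {T : Set (List ℕ)} {π is : List ℕ} :
    IsOcc T π is ↔ is <+ range π.length ∧ ∃ σ ∈ T, OrdIso (is.map (π.getD · 0)) σ.reverse := by
  rw [List.sublist_range_iff, ← isChain_iff_pairwise, and_assoc]
  rfl

theorem List.IsPrefix.getD_eq {α : Type*} {P w : List α} (h : P <+: w) {i : ℕ} (hi : i < P.length)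
    (d : α) :
    P.getD i d = w.getD i d := by
  rw [getD_eq_getElem _ _ hi, getD_eq_getElem _ _ (hi.trans_le h.length_le), h.getElem]

theorem List.IsPrefix.map_getD_eq {α : Type*} {P w : List α} {is : List ℕ} (h : P <+: w)
    (his : is <+ range P.length) (d : α) : is.map (w.getD · d) = is.map (P.getD · d) :=
  map_congr_left fun _ hi => (h.getD_eq (mem_range.mp (his.subset hi)) d).symm

theorem List.IsPrefix.map_getD_sublist {α : Type*} {P w : List α} {is : List ℕ} (h : P <+: w)
    (his : is <+ range P.length) (d : α) : is.map (w.getD · d) <+ P := by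
  rw [h.map_getD_eq his]
  simpa only [map_getD_range] using his.map (P.getD · d)

theorem OrdIso.reverse {u v : List ℕ} (h : OrdIso u v) : OrdIso u.reverse v.reverse := by
  obtain ⟨hlen, hiso⟩ := h
  refine ⟨by simp [hlen], fun i j hi hj => ?_⟩
  simp only [length_reverse] at hi hj
  have getD_reverse : ∀ (l : List ℕ) (m : ℕ), m < l.length →
      l.reverse.getD m 0 = l.getD (l.length - 1 - m) 0 := fun l m hm => by
    rw [getD_eq_getElem _ 0 (by simpa using hm), getD_eq_getElem _ 0 (by omega), getElem_reverse]
  rw [getD_reverse u i hi, getD_reverse u j hj, getD_reverse v i (hlen ▸ hi),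
    getD_reverse v j (hlen ▸ hj), hlen]
  exact hiso _ _ (by omega) (by omega)

theorem Contains.reverse {w p : List ℕ} (h : Contains w p) : Contains w.reverse p.reverse :=
  let ⟨u, hsub, hiso⟩ := h
  ⟨u.reverse, hsub.reverse, hiso.reverse⟩

theorem not_avoidsSet_reverse_iff {T : Set (List ℕ)} {w : List ℕ} :
    ¬ AvoidsSet T w.reverse ↔ ∃ is, IsOcc T w is := by
  simp only [AvoidsSet, not_forall, not_not, exists_prop, isOcc_iff]
  constructor
  · rintro ⟨σ, hσ, hcont⟩
    obtain ⟨is, his, hiso⟩ := contains_iff_exists_indices.mp (by simpa using hcont.reverse)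
    exact ⟨is, his, σ, hσ, hiso⟩
  · rintro ⟨is, his, σ, hσ, hiso⟩
    exact ⟨σ, hσ, by simpa using (contains_iff_exists_indices.mpr ⟨is, his, hiso⟩).reverse⟩

theorem IsOcc.of_prefix {T : Set (List ℕ)} {P w is : List ℕ} (h : P <+: w)
    (hocc : IsOcc T P is) : IsOcc T w is := by
  obtain ⟨his, σ, hσ, hiso⟩ := isOcc_iff.mp hocc
  refine isOcc_iff.mpr ⟨his.trans (range_sublist.mpr h.length_le), σ, hσ, ?_⟩
  rwa [h.map_getD_eq his]

section Machine

variable (T : Set (List ℕ))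

theorem sTaux_nil (s o : List ℕ) : sTaux T [] s o = o ++ s := by
  rw [sTaux.eq_def]

theorem sTaux_cons_of_avoidsSet {x : ℕ} {s : List ℕ} (rest o : List ℕ)
    (h : AvoidsSet T (x :: s)) : sTaux T (x :: rest) s o = sTaux T rest (x :: s) o := by
  rw [sTaux.eq_def]; simp [h]

theorem sTaux_nil_of_not_avoidsSet {x : ℕ} (rest o : List ℕ) (h : ¬ AvoidsSet T [x]) :
    sTaux T (x :: rest) [] o = sTaux T rest [x] o := by
  rw [sTaux.eq_def]; simp [h]

theorem sTaux_cons_cons_of_not_avoidsSet {x y : ℕ} {s : List ℕ} (rest o : List ℕ)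
    (h : ¬ AvoidsSet T (x :: y :: s)) :
    sTaux T (x :: rest) (y :: s) o = sTaux T (x :: rest) s (o ++ [y]) := by
  rw [sTaux.eq_def]; simp [h]

theorem sTaux_eq_append (inp s o : List ℕ) : sTaux T inp s o = o ++ sTaux T inp s [] := by
  revert o
  refine sTaux.induct T (motive := fun inp s _ => ∀ o, sTaux T inp s o = o ++ sTaux T inp s [])
    ?_ ?_ ?_ ?_ inp s []
  · intro s _ o
    simp [sTaux_nil]
  · intro x rest s _ h ih o
    rw [sTaux_cons_of_avoidsSet T rest o h, sTaux_cons_of_avoidsSet T rest [] h, ih]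
  · intro x rest _ h ih o
    rw [sTaux_nil_of_not_avoidsSet T rest o h, sTaux_nil_of_not_avoidsSet T rest [] h, ih]
  · intro x rest _ y s h ih o
    rw [sTaux_cons_cons_of_not_avoidsSet T rest o h, sTaux_cons_cons_of_not_avoidsSet T rest [] h,
      ih, ih ([] ++ [y]), nil_append, append_assoc]

theorem sTaux_append_of_avoidsSet {p s : List ℕ} (q o : List ℕ)
    (h : ∀ p', p' <+: p → p' ≠ [] → AvoidsSet T (p'.reverse ++ s)) :
    sTaux T (p ++ q) s o = sTaux T q (p.reverse ++ s) o := by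
  induction p using reverseRecOn generalizing q with
  | nil => simp
  | append_singleton p a ih =>
    have hpush : AvoidsSet T (a :: (p.reverse ++ s)) := by
      simpa using h _ (prefix_refl _) (by simp)
    rw [append_assoc, singleton_append,
      ih _ fun p' hp' => h p' (hp'.trans (prefix_append _ _)),
      sTaux_cons_of_avoidsSet T q o hpush]
    simp

theorem sTaux_reverse_append_of_not_avoidsSet {x : ℕ} {u s : List ℕ} (q o : List ℕ)
    (h : ∀ u', u' <+: u → u' ≠ [] → ¬ AvoidsSet T (x :: (u'.reverse ++ s))) :
    sTaux T (x :: q) (u.reverse ++ s) o = sTaux T (x :: q) s (o ++ u.reverse) := by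
  induction u using reverseRecOn generalizing o with
  | nil => simp
  | append_singleton u y ih =>
    have hpop : ¬ AvoidsSet T (x :: y :: (u.reverse ++ s)) := by
      simpa using h _ (prefix_refl _) (by simp)
    rw [reverse_append, reverse_singleton, singleton_append, cons_append,
      sTaux_cons_cons_of_not_avoidsSet T q o hpop,
      ih _ fun u' hu' => h u' (hu'.trans (prefix_append _ _)), append_assoc, singleton_append]

theorem sT_append_append_cons (A B C : List ℕ) (x : ℕ)
    (hpush : ∀ P, P <+: A ++ B → P ≠ [] → AvoidsSet T P.reverse)
    (hpop : ∀ B', B' <+: B → B' ≠ [] → ¬ AvoidsSet T (A ++ B' ++ [x]).reverse) :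
    sT T (A ++ B ++ x :: C) = B.reverse ++ sT T (A ++ x :: C) := by
  have hpushA : ∀ P, P <+: A → P ≠ [] → AvoidsSet T (P.reverse ++ []) := fun P hP => by
    simpa using hpush P (hP.trans (prefix_append _ _))
  calc sT T (A ++ B ++ x :: C)
      = sTaux T (x :: C) (B.reverse ++ A.reverse) [] := by
        rw [sT, sTaux_append_of_avoidsSet T _ _ (by simpa using hpush), reverse_append,
          append_nil]
    _ = sTaux T (x :: C) A.reverse B.reverse :=
        sTaux_reverse_append_of_not_avoidsSet T _ _ fun B' hB' hne => by
          simpa using hpop B' hB' hne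
    _ = B.reverse ++ sT T (A ++ x :: C) := by
        rw [sTaux_eq_append, sT, sTaux_append_of_avoidsSet T _ _ hpushA, append_nil]

end Machine

theorem ColexLe.exists_le_of_append_singleton {u v : List ℕ} {a : ℕ}
    (h : ColexLe (u ++ [a]) v) : ∃ b ∈ v, a ≤ b := by
  rcases h with rfl | hlex
  · exact ⟨a, by simp, le_rfl⟩
  · rw [reverse_append, reverse_singleton, singleton_append] at hlex
    rcases hv : v.reverse with _ | ⟨b, bs⟩
    · rw [hv] at hlex; cases hlex
    · have hb : b ∈ v := mem_reverse.mp (hv ▸ mem_cons_self)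
      rw [hv] at hlex
      cases hlex with
      | cons => exact ⟨_, hb, le_rfl⟩
      | rel hab => exact ⟨b, hb, hab.le⟩

theorem sT_append_append_of_colexLe {T : Set (List ℕ)} {A B C c : List ℕ}
    (hc : ∀ i ∈ c, i ≤ A.length)
    (hocc : IsOcc T (A ++ B ++ C) (c ++ [A.length + B.length]))
    (hleast : ∀ js, IsOcc T (A ++ B ++ C) js → ColexLe (c ++ [A.length + B.length]) js) :
    sT T (A ++ B ++ C) = B.reverse ++ sT T (A ++ C) := by
  obtain ⟨his, σ, hσ, hiso⟩ := isOcc_iff.mp hocc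
  have hlast : A.length + B.length < (A ++ B ++ C).length := mem_range.mp (his.subset (by simp))
  obtain ⟨x, C, rfl⟩ : ∃ x C', C = x :: C' := by
    cases C with
    | nil => simp at hlast
    | cons x C' => exact ⟨x, C', rfl⟩
  apply sT_append_append_cons
  · intro P hP _
    by_contra hP'
    obtain ⟨js, hjs⟩ := not_avoidsSet_reverse_iff.mp hP'
    obtain ⟨b, hb, hab⟩ :=
      (hleast js (hjs.of_prefix (hP.trans (prefix_append _ _)))).exists_le_of_append_singleton
    have hbP : b < P.length := mem_range.mp ((isOcc_iff.mp hjs).1.subset hb)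
    have hPlen := hP.length_le
    simp only [length_append] at hPlen
    omega
  · intro B' hB' hne hav
    refine hav σ hσ ?_
    rw [← reverse_reverse σ]
    refine Contains.reverse ⟨_, ?_, hiso⟩
    have hcB' : c <+ range (A ++ B').length := by
      have hB'len : 0 < B'.length := length_pos_iff.mpr hne
      refine sublist_range_iff.mpr ⟨(sublist_range_iff.mp his).1.sublist (sublist_append_left _ _),
        fun i hi => ?_⟩
      have := hc i hi
      simp only [length_append]
      omega
    have hpre : A ++ B' <+: A ++ B ++ x :: C :=
      (prefix_append_right_inj A |>.mpr hB').trans (prefix_append _ _)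
    rw [map_append]
    simpa using (hpre.map_getD_sublist hcB' 0).append (Sublist.refl [x])

def blockStarts (as : List (List ℕ)) : List ℕ :=
  (range (as.length - 1)).map fun i => ((as.take (i + 1)).flatten).length

theorem blockStarts_append_singleton {as : List (List ℕ)} (has : as ≠ []) (C : List ℕ) :
    blockStarts (as ++ [C]) = blockStarts as ++ [as.flatten.length] := by
  obtain ⟨n, hn⟩ : ∃ n, as.length = n + 1 :=
    Nat.exists_eq_succ_of_ne_zero (length_pos_iff.mpr has).ne'
  simp only [blockStarts, length_append, length_singleton, hn, Nat.add_sub_cancel, range_succ,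
    map_append, map_singleton]
  congr 1
  · exact map_congr_left fun i hi => by
      rw [take_append_of_le_length (by simp only [mem_range] at hi; omega)]
  · rw [← hn, take_left' rfl]

theorem blockStarts_le (D : List (List ℕ)) (B : List ℕ) :
    ∀ i ∈ blockStarts (D ++ [B]), i ≤ D.flatten.length := by
  simp only [blockStarts, length_append, length_singleton, Nat.add_sub_cancel, mem_map, mem_range]
  rintro _ ⟨j, hj, rfl⟩
  rw [take_append_of_le_length (by omega)]
  exact ((take_sublist _ _).flatten).length_le

theorem List.exists_eq_append_pair {α : Type*} {l : List α} (h : 2 ≤ l.length) :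
    ∃ D b c, l = D ++ [b, c] := by
  have hdrop : (l.drop (l.length - 2)).length = 2 := by rw [length_drop]; omega
  obtain ⟨b, c, hbc⟩ := length_eq_two.mp hdrop
  exact ⟨_, b, c, by rw [← hbc, take_append_drop]⟩

theorem stmt2_general (T : Set (List ℕ)) (π : List ℕ)
    (as : List (List ℕ)) (hclump : IsClumping T π as) :
    sT T π = (as.getD (as.length - 2) []).reverse ++
      sT T ((as.take (as.length - 2)).flatten ++ as.getD (as.length - 1) []) := by
  obtain ⟨rfl, hlen, hocc, hleast⟩ := hclump
  obtain ⟨D, B, C, rfl⟩ := exists_eq_append_pair hlen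
  have hflat : (D ++ [B, C]).flatten = D.flatten ++ B ++ C := by simp
  have hstarts :
      blockStarts (D ++ [B, C]) = blockStarts (D ++ [B]) ++ [D.flatten.length + B.length] := by
    rw [show D ++ [B, C] = D ++ [B] ++ [C] by simp, blockStarts_append_singleton (by simp)]
    simp
  rw [← blockStarts, hstarts, hflat] at hocc hleast
  simpa using sT_append_append_of_colexLe (blockStarts_le D B) hocc hleast

/-- The recursion for `s_T` via the `T`-clumping `(a_0, …, a_k)`:
`s_T(π) = a_{k-1}^r · s_T(a_0 ⋯ a_{k-2} a_k)`. -/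
theorem stmt2 (T : Set (List ℕ)) (π : List ℕ) (hπ : IsPermList π)
    (as : List (List ℕ)) (hclump : IsClumping T π as) :
    sT T π = (as.getD (as.length - 2) []).reverse ++
      sT T ((as.take (as.length - 2)).flatten ++ as.getD (as.length - 1) []) :=
  stmt2_general T π as hclump
end

section
/- If T is a set of permutations all of length at least k, then every permutation of length n > k has at most C_{n−k+2} preimages under s_T, where C_m denotes the m-th Catalan number. -/
open List

attribute [local instance] Classical.propDecidable

/-!
Record a run of `s_T` by its push/pop word, `U` for a push and `D` for a pop; the output and
this word determine the input. A pop of `y` from the stack `y :: s` happens only when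
`x :: y :: s` contains a pattern of `T`, which has at least `k` entries, so no pop leaves fewer
than `k - 2` entries on the stack. Hence the word starts with `k - 2` pushes and afterwards never
goes below height `k - 2`; it also ends with a push, since the last input entry is always pushed.
Removing the first `k - 2` letters and closing up with down steps gives a Dyck path of semilength
`n - k + 2` from which the word can be read back.
-/

open DyckStep

theorem catalan_mono : Monotone catalan := by
  refine monotone_nat_of_le_succ fun n => ?_
  rw [catalan_succ]
  calc catalan n = catalan (0 : Fin n.succ) * catalan (n - (0 : Fin n.succ)) := by simp
    _ ≤ ∑ i : Fin n.succ, catalan i * catalan (n - i) :=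
      Finset.single_le_sum (f := fun i : Fin n.succ => catalan i * catalan (n - i))
        (fun _ _ => Nat.zero_le _) (Finset.mem_univ 0)

theorem DyckWord.finite_setOf_semilength_eq (m : ℕ) :
    {p : DyckWord | p.semilength = m}.Finite :=
  Set.finite_coe_iff.1 (inferInstanceAs (Finite {p : DyckWord // p.semilength = m}))

theorem DyckWord.ncard_setOf_semilength_eq (m : ℕ) :
    {p : DyckWord | p.semilength = m}.ncard = catalan m := by
  rw [← Nat.card_coe_set_eq, Set.coe_ofPred, Nat.card_eq_fintype_card,
    DyckWord.card_dyckWord_semilength_eq_catalan]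

theorem List.rdropWhile_append_replicate {α : Type*} {p : α → Bool} {x : α} (hx : p x)
    {l : List α} (hl : ∀ h : l ≠ [], ¬ p (l.getLast h)) (a : ℕ) :
    (l ++ replicate a x).rdropWhile p = l := by
  induction a with
  | zero => simpa [rdropWhile_eq_self_iff] using hl
  | succ a ih => rwa [replicate_succ', ← append_assoc, rdropWhile_concat_pos _ _ _ hx]

def closeUp (l : List DyckStep) : List DyckStep := l ++ replicate (l.count U - l.count D) D

theorem closeUp_injOn : Set.InjOn closeUp {l | l.getLast? = some U} := by
  have key : ∀ l : List DyckStep, l.getLast? = some U → (closeUp l).rdropWhile (· == D) = l := by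
    intro l hl
    refine rdropWhile_append_replicate (by rfl) (fun h => ?_) _
    simp [getLast?_eq_some_getLast h] at hl
    simp [hl]
  intro l hl l' hl' he
  rw [← key l hl, ← key l' hl', he]

theorem exists_dyckWord_toList_eq_closeUp {l : List DyckStep}
    (hl : ∀ i, (l.take i).count D ≤ (l.take i).count U) :
    ∃ p : DyckWord, p.semilength = l.count U ∧ p.toList = closeUp l := by
  have hDU : l.count D ≤ l.count U := by simpa using hl l.length
  refine ⟨⟨closeUp l, ?_, fun i => ?_⟩, ?_, rfl⟩
  · simp [closeUp, count_replicate]; omega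
  · rw [closeUp, take_append, count_append, count_append]
    rcases le_or_gt i l.length with hi | hi
    · simpa [Nat.sub_eq_zero_of_le hi] using hl i
    · rw [take_of_length_le hi.le, take_replicate]
      simp [count_replicate]; omega
  · simp [DyckWord.semilength, closeUp, count_replicate]

def replay : List DyckStep → List ℕ → List ℕ → List ℕ
  | [], _, stack => stack
  | U :: ops, input, stack => replay ops input.tail (input.headD 0 :: stack)
  | D :: ops, input, stack => stack.headD 0 :: replay ops input stack.tail

/-- `StackRun j ops u s`: the push/pop word `ops` can be run from `u` input entries and `s` stack
entries, consuming the whole input, and no pop leaves fewer than `j` entries on the stack. -/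
inductive StackRun (j : ℕ) : List DyckStep → ℕ → ℕ → Prop
  | nil (s : ℕ) : StackRun j [] 0 s
  | push {ops : List DyckStep} {u s : ℕ} :
      StackRun j ops u (s + 1) → StackRun j (U :: ops) (u + 1) s
  | pop {ops : List DyckStep} {u s : ℕ} :
      j ≤ s → StackRun j ops u s → StackRun j (D :: ops) u (s + 1)

namespace StackRun

variable {j : ℕ} {ops : List DyckStep}

theorem count_U {u s : ℕ} (h : StackRun j ops u s) : ops.count U = u := by
  induction h <;> simp_all

theorem count_D_take_add_le {u s : ℕ} (h : StackRun j ops u s) (hs : j ≤ s) (i : ℕ) :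
    (ops.take i).count D + j ≤ (ops.take i).count U + s := by
  induction h generalizing i with
  | nil => simpa using hs
  | push _ ih =>
    cases i with
    | zero => simpa using hs
    | succ i => have := ih (by omega) i; simp; omega
  | pop hjs _ ih =>
    cases i with
    | zero => simpa using hs
    | succ i => have := ih hjs i; simp; omega

theorem exists_eq_replicate_append {u s : ℕ} (h : StackRun j ops u s) (hs : s ≤ j)
    (hu : j - s ≤ u) :
    ∃ rest, ops = replicate (j - s) U ++ rest ∧ StackRun j rest (u - (j - s)) j := by
  induction h with
  | nil s =>
    obtain rfl : s = j := by omega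
    exact ⟨[], by simp, by simpa using StackRun.nil s⟩
  | @push ops u s hrun ih =>
    rcases hs.eq_or_lt with rfl | hlt
    · exact ⟨U :: ops, by simp, by simpa using hrun.push⟩
    · obtain ⟨rest, rfl, hrest⟩ := ih hlt (by omega)
      refine ⟨rest, ?_, by simpa [show u + 1 - (j - s) = u - (j - (s + 1)) by omega] using hrest⟩
      rw [show j - s = j - (s + 1) + 1 by omega, replicate_succ, cons_append]
  | pop hjs => omega

theorem replay_inj {input input' stack stack' : List ℕ}
    (h : StackRun j ops input.length stack.length)
    (h' : StackRun j ops input'.length stack'.length)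
    (he : replay ops input stack = replay ops input' stack') : input = input' ∧ stack = stack' := by
  induction ops generalizing input input' stack stack' with
  | nil =>
    have hi := h.count_U; have hi' := h'.count_U
    simp only [count_nil] at hi hi'
    simp_all [eq_comm, replay]
  | cons op ops ih =>
    cases op with
    | U =>
      obtain _ | ⟨x, input⟩ := input; · cases h
      obtain _ | ⟨x', input'⟩ := input'; · cases h'
      cases h with | push hr => cases h' with | push hr' =>
      obtain ⟨rfl, hst⟩ := ih (stack := x :: stack) (stack' := x' :: stack') hr hr' he
      simp_all
    | D =>
      obtain _ | ⟨y, stack⟩ := stack; · cases h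
      obtain _ | ⟨y', stack'⟩ := stack'; · cases h'
      cases h with | pop _ hr => cases h' with | pop _ hr' =>
      simp only [replay, headD_cons, tail_cons, cons.injEq] at he
      obtain ⟨rfl, rfl⟩ := ih hr hr' he.2
      simp [he.1]

end StackRun

noncomputable def sTrace (T : Set (List ℕ)) : List ℕ → List ℕ → List DyckStep
  | [], _ => []
  | x :: rest, stack =>
    if AvoidsSet T (x :: stack) then U :: sTrace T rest (x :: stack)
    else
      match stack with
      | [] => U :: sTrace T rest [x]
      | _ :: s => D :: sTrace T (x :: rest) s
termination_by input stack => 2 * input.length + stack.length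
decreasing_by all_goals simp only [length_cons]; omega

theorem sTaux_eq_append_replay (T : Set (List ℕ)) (input stack out : List ℕ) :
    sTaux T input stack out = out ++ replay (sTrace T input stack) input stack := by
  induction input, stack, out using sTaux.induct T with
  | case1 stack out => rw [sTaux, sTrace]; rfl
  | case2 x rest stack out h ih
  | case3 x rest out h ih
  | case4 x rest out y s h ih =>
    rw [sTaux.eq_def, sTrace.eq_def]
    simp [h, ih, replay]

theorem sT_eq_replay (T : Set (List ℕ)) (w : List ℕ) : sT T w = replay (sTrace T w []) w [] := by
  rw [sT, sTaux_eq_append_replay, nil_append]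

section Trace

variable {T : Set (List ℕ)} {k : ℕ}

theorem length_le_of_not_avoidsSet (hk : ∀ σ ∈ T, k ≤ σ.length) {w : List ℕ}
    (h : ¬ AvoidsSet T w) : k ≤ w.length := by
  simp only [AvoidsSet, not_forall, not_not] at h
  obtain ⟨p, hp, u, hu, hiso⟩ := h
  exact (hk p hp).trans (hiso.1 ▸ hu.length_le)

theorem stackRun_sTrace (hk : ∀ σ ∈ T, k ≤ σ.length) (input stack : List ℕ) :
    StackRun (k - 2) (sTrace T input stack) input.length stack.length := by
  induction input, stack using sTrace.induct T with
  | case1 stack => rw [sTrace]; exact .nil _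
  | case2 x rest stack h ih => rw [sTrace.eq_def]; simp only [if_pos h]; exact .push ih
  | case3 x rest h ih => rw [sTrace, if_neg h]; exact .push ih
  | case4 x rest y s h ih =>
    rw [sTrace, if_neg h]
    have hpattern := length_le_of_not_avoidsSet hk h
    simp only [length_cons] at hpattern
    exact .pop (by omega) ih

theorem getLast?_sTrace (input stack : List ℕ) :
    (sTrace T input stack).getLast? = if input = [] then none else some U := by
  induction input, stack using sTrace.induct T with
  | case1 stack => rw [sTrace]; rfl
  | case2 x rest stack h ih =>
    rw [sTrace.eq_def]; simp only [if_pos h]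
    split_ifs at ih <;> simp [getLast?_cons, ih]
  | case3 x rest h ih =>
    rw [sTrace, if_neg h]
    split_ifs at ih <;> simp [getLast?_cons, ih]
  | case4 x rest y s h ih => simp [sTrace, h, getLast?_cons, ih]

theorem exists_sTrace_eq_replicate_append (hk : ∀ σ ∈ T, k ≤ σ.length) {w : List ℕ}
    (hw : k - 2 < w.length) :
    ∃ rest, sTrace T w [] = replicate (k - 2) U ++ rest ∧ rest.getLast? = some U ∧
      StackRun (k - 2) rest (w.length - (k - 2)) (k - 2) := by
  obtain ⟨rest, htr, hrun⟩ :=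
    (stackRun_sTrace hk w []).exists_eq_replicate_append (Nat.zero_le _) (by simpa using hw.le)
  have hrest : rest ≠ [] := by
    rintro rfl
    have := hrun.count_U
    simp at this
    omega
  refine ⟨rest, htr, ?_, hrun⟩
  have hlast := getLast?_sTrace (T := T) w []
  rwa [if_neg (ne_nil_of_length_pos (by omega)), htr, getLast?_append_of_ne_nil _ hrest] at hlast

noncomputable def dyckCode (T : Set (List ℕ)) (k : ℕ) (w : List ℕ) : List DyckStep :=
  closeUp ((sTrace T w []).drop (k - 2))

theorem dyckCode_mem (hk : ∀ σ ∈ T, k ≤ σ.length) {w : List ℕ} (hw : k - 2 < w.length) :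
    dyckCode T k w ∈ DyckWord.toList '' {p | p.semilength = w.length - (k - 2)} := by
  obtain ⟨rest, htr, -, hrun⟩ := exists_sTrace_eq_replicate_append hk hw
  obtain ⟨p, hp, hpl⟩ := exists_dyckWord_toList_eq_closeUp
    (fun i => by simpa using hrun.count_D_take_add_le le_rfl i)
  refine ⟨p, by rw [Set.mem_ofPred_eq, hp, hrun.count_U], ?_⟩
  rw [hpl, dyckCode, htr, drop_left' length_replicate]

theorem eq_of_dyckCode_eq (hk : ∀ σ ∈ T, k ≤ σ.length) {w w' : List ℕ}
    (hw : k - 2 < w.length) (hw' : k - 2 < w'.length) (hs : sT T w = sT T w')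
    (hc : dyckCode T k w = dyckCode T k w') : w = w' := by
  obtain ⟨rest, htr, hlast, -⟩ := exists_sTrace_eq_replicate_append hk hw
  obtain ⟨rest', htr', hlast', -⟩ := exists_sTrace_eq_replicate_append hk hw'
  have hrest : rest = rest' := by
    rw [dyckCode, dyckCode, htr, htr', drop_left' length_replicate,
      drop_left' length_replicate] at hc
    exact closeUp_injOn hlast hlast' hc
  have htrace : sTrace T w [] = sTrace T w' [] := by rw [htr, htr', hrest]
  rw [sT_eq_replay, sT_eq_replay, ← htrace] at hs
  refine (StackRun.replay_inj (stackRun_sTrace hk w []) ?_ hs).1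
  rw [htrace]
  exact stackRun_sTrace hk w' []

end Trace

theorem stmt6_general (T : Set (List ℕ)) (k n : ℕ) (hk : ∀ σ ∈ T, k ≤ σ.length)
    (hn : k < n) (π : List ℕ) :
    {w : List ℕ | IsPermList w ∧ w.length = n ∧ sT T w = π}.ncard
      ≤ catalan (n - k + 2) := by
  have hlt : k - 2 < n := by omega
  calc _ ≤ (DyckWord.toList '' {p | p.semilength = n - (k - 2)}).ncard := by
        refine Set.ncard_le_ncard_of_injOn (dyckCode T k) ?_ ?_
          ((DyckWord.finite_setOf_semilength_eq _).image _)
        · rintro w ⟨-, rfl, -⟩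
          exact dyckCode_mem hk hlt
        · rintro w ⟨-, hw, hwπ⟩ w' ⟨-, hw', hw'π⟩ hc
          exact eq_of_dyckCode_eq hk (hw ▸ hlt) (hw' ▸ hlt) (hwπ.trans hw'π.symm) hc
    _ = catalan (n - (k - 2)) := by
        rw [Set.ncard_image_of_injective _ fun _ _ => DyckWord.ext,
          DyckWord.ncard_setOf_semilength_eq]
    _ ≤ catalan (n - k + 2) := catalan_mono (by omega)

/-- If every pattern in `T` has length ≥ k, every permutation of length `n > k` has at
most `C_{n-k+2}` preimages under `s_T`. -/
theorem stmt6 (T : Set (List ℕ)) (k n : ℕ) (hk : ∀ σ ∈ T, k ≤ σ.length)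
    (hn : k < n) (π : List ℕ) (hπ : IsPermList π) (hlen : π.length = n) :
    {w : List ℕ | IsPermList w ∧ w.length = n ∧ sT T w = π}.ncard
      ≤ catalan (n - k + 2) :=
  stmt6_general T k n hk hn π
end
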